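/- Let d ≥ 4 be an integer and set l = √(2d/(d+1)). For x in the interval [√(2(d−3)/(d−2)), √(2(d−2)/(d−1))], define ρ(x) = arccos √((l²(4 − x²) − 4)/((4 − x²)(l² − x²))) and τ(x) = arccos((l² − 2)/(l·√(l² − x²))). Then the function x ↦ ρ(x) + τ(x) is strictly increasing on [√(2(d−3)/(d−2)), √(2(d−2)/(d−1))]. -/
import Mathlib


open MeasureTheory Metric

noncomputable section

/-- The angle `ρ(x) = arccos √((l²(4 - x²) - 4)/((4 - x²)(l² - x²)))`. -/
def rhoAngle (l x : ℝ) : ℝ :=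
  Real.arccos (Real.sqrt ((l ^ 2 * (4 - x ^ 2) - 4) / ((4 - x ^ 2) * (l ^ 2 - x ^ 2))))

/-- The angle `τ(x) = arccos ((l² - 2)/(l √(l² - x²)))`. -/
def tauAngle (l x : ℝ) : ℝ :=
  Real.arccos ((l ^ 2 - 2) / (l * Real.sqrt (l ^ 2 - x ^ 2)))

/-- `arccos` is globally antitone. -/
lemma arccos_antitone' : Antitone Real.arccos := fun _ _ h =>
  sub_le_sub_left (Real.monotone_arcsin h) _

/-- The key polynomial inequality. -/
lemma keyPoly (D u v : ℝ) (hD : 4 ≤ D) (hul : 2 * D - 4 ≤ D * u)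
    (hvl : 2 * D - 4 ≤ D * v) (hvu : (D - 1) * v ≤ 2 * (D - 2)) :
    0 ≤ 2 * (D - 1) * (u + v) - D * u * v - 4 * D + 8 := by
  have hDpos : (0:ℝ) < D := by linarith
  have hf1 : 0 ≤ 2 * (D - 1) - D * v := by nlinarith
  nlinarith [mul_nonneg hf1 (by linarith : (0:ℝ) ≤ D * u - (2 * D - 4)), hvl, hDpos]

/-- Facts about members of the interval. -/
lemma memFacts (D z : ℝ) (hD : 4 ≤ D)
    (hza : Real.sqrt (2 * (D - 3) / (D - 2)) ≤ z)
    (hzb : z ≤ Real.sqrt (2 * (D - 2) / (D - 1))) :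
    1 ≤ z ∧ (D - 1) * z ^ 2 ≤ 2 * (D - 2) ∧ 2 * D - 4 ≤ D * z ^ 2 := by
  have ha : (1:ℝ) ≤ 2 * (D - 3) / (D - 2) := by
    rw [le_div_iff₀ (by linarith)]; linarith
  have h1 : 1 ≤ z := le_trans (by
    rw [show (1:ℝ) = Real.sqrt 1 by simp]
    exact Real.sqrt_le_sqrt ha) hza
  have hz0 : 0 ≤ z := by linarith
  have hzb2 : z ^ 2 ≤ 2 * (D - 2) / (D - 1) := by
    have hs := Real.sq_sqrt (show (0:ℝ) ≤ 2 * (D - 2) / (D - 1) from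
      div_nonneg (by linarith) (by linarith))
    calc z ^ 2 ≤ (Real.sqrt (2 * (D - 2) / (D - 1))) ^ 2 :=
          pow_le_pow_left₀ hz0 hzb 2
      _ = 2 * (D - 2) / (D - 1) := hs
  have hza2 : 2 * (D - 3) / (D - 2) ≤ z ^ 2 := by
    have hs := Real.sq_sqrt (show (0:ℝ) ≤ 2 * (D - 3) / (D - 2) from
      div_nonneg (by linarith) (by linarith))
    calc 2 * (D - 3) / (D - 2) = (Real.sqrt (2 * (D - 3) / (D - 2))) ^ 2 := hs.symm
      _ ≤ z ^ 2 := pow_le_pow_left₀ (Real.sqrt_nonneg _) hza 2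
  refine ⟨h1, ?_, ?_⟩
  · rw [le_div_iff₀ (show (0:ℝ) < D - 1 by linarith)] at hzb2
    linarith
  · rw [div_le_iff₀ (show (0:ℝ) < D - 2 by linarith)] at hza2
    nlinarith [hza2, sq_nonneg z]

set_option maxHeartbeats 2000000 in
/-- Main auxiliary comparison with abstract data. -/
lemma mainAux (D l x y : ℝ) (hD : 4 ≤ D) (hLD : l ^ 2 * (D + 1) = 2 * D)
    (hlpos : 0 < l) (hxy : x < y)
    (hx1 : 1 ≤ x) (hxu : (D - 1) * x ^ 2 ≤ 2 * (D - 2)) (hxl : 2 * D - 4 ≤ D * x ^ 2)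
    (hy1 : 1 ≤ y) (hyu : (D - 1) * y ^ 2 ≤ 2 * (D - 2)) (hyl : 2 * D - 4 ≤ D * y ^ 2) :
    rhoAngle l x + tauAngle l x < rhoAngle l y + tauAngle l y := by
  have hD1 : (0:ℝ) < D + 1 := by linarith
  have hx0 : (0:ℝ) ≤ x := by linarith
  have hxy2 : x ^ 2 < y ^ 2 := by nlinarith
  have hx2lt2 : x ^ 2 < 2 := by nlinarith
  have hy2lt2 : y ^ 2 < 2 := by nlinarith
  have h4x : (0:ℝ) < 4 - x ^ 2 := by linarith
  have h4y : (0:ℝ) < 4 - y ^ 2 := by linarith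
  have hLx : 0 < l ^ 2 - x ^ 2 := by nlinarith [hLD, hxu, hx2lt2]
  have hLy : 0 < l ^ 2 - y ^ 2 := by nlinarith [hLD, hyu, hy2lt2]
  have hL2 : l ^ 2 - 2 < 0 := by nlinarith [hLD]
  -- ρ is monotone
  have hrho : rhoAngle l x ≤ rhoAngle l y := by
    unfold rhoAngle
    apply arccos_antitone'
    apply Real.sqrt_le_sqrt
    rw [div_le_div_iff₀ (by positivity) (by positivity)]
    have hB : (l ^ 2 * (4 - x ^ 2) - 4) * ((4 - y ^ 2) * (l ^ 2 - y ^ 2)) -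
        (l ^ 2 * (4 - y ^ 2) - 4) * ((4 - x ^ 2) * (l ^ 2 - x ^ 2)) =
        (y ^ 2 - x ^ 2) * ((4 * l ^ 2 - 4) * (x ^ 2 + y ^ 2) - l ^ 2 * x ^ 2 * y ^ 2
          + 16 - 12 * l ^ 2) := by ring
    have hP : 0 ≤ 2 * (D - 1) * (x ^ 2 + y ^ 2) - D * x ^ 2 * y ^ 2 - 4 * D + 8 :=
      keyPoly D (x ^ 2) (y ^ 2) hD hxl hyl hyu
    have hBP : ((4 * l ^ 2 - 4) * (x ^ 2 + y ^ 2) - l ^ 2 * x ^ 2 * y ^ 2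
          + 16 - 12 * l ^ 2) * (D + 1) =
        2 * (2 * (D - 1) * (x ^ 2 + y ^ 2) - D * x ^ 2 * y ^ 2 - 4 * D + 8) := by
      linear_combination (4 * (x ^ 2 + y ^ 2) - x ^ 2 * y ^ 2 - 12) * hLD
    have hBpos : 0 ≤ (4 * l ^ 2 - 4) * (x ^ 2 + y ^ 2) - l ^ 2 * x ^ 2 * y ^ 2
          + 16 - 12 * l ^ 2 := by nlinarith [hBP, hP, hD1]
    nlinarith [hB, hBpos, hxy2]
  -- τ is strictly monotone
  have htau : tauAngle l x < tauAngle l y := by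
    unfold tauAngle
    have hsx : 0 < Real.sqrt (l ^ 2 - x ^ 2) := Real.sqrt_pos.mpr hLx
    have hsy : 0 < Real.sqrt (l ^ 2 - y ^ 2) := Real.sqrt_pos.mpr hLy
    have hsq : Real.sqrt (l ^ 2 - y ^ 2) < Real.sqrt (l ^ 2 - x ^ 2) :=
      Real.sqrt_lt_sqrt (le_of_lt hLy) (by linarith)
    have hpx : 0 < l * Real.sqrt (l ^ 2 - x ^ 2) := by positivity
    have hpy : 0 < l * Real.sqrt (l ^ 2 - y ^ 2) := by positivity
    have hplt : l * Real.sqrt (l ^ 2 - y ^ 2) < l * Real.sqrt (l ^ 2 - x ^ 2) :=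
      mul_lt_mul_of_pos_left hsq hlpos
    have harg : (l ^ 2 - 2) / (l * Real.sqrt (l ^ 2 - y ^ 2)) <
        (l ^ 2 - 2) / (l * Real.sqrt (l ^ 2 - x ^ 2)) := by
      rw [div_lt_div_iff₀ hpy hpx]
      exact mul_lt_mul_of_neg_left hplt hL2
    have hbound : ∀ z : ℝ, (D - 1) * z ^ 2 ≤ 2 * (D - 2) → 0 < l ^ 2 - z ^ 2 →
        (l ^ 2 - 2) / (l * Real.sqrt (l ^ 2 - z ^ 2)) ∈ Set.Icc (-1 : ℝ) 1 := by
      intro z hzu hLz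
      have hsz : 0 < Real.sqrt (l ^ 2 - z ^ 2) := Real.sqrt_pos.mpr hLz
      have hpz : 0 < l * Real.sqrt (l ^ 2 - z ^ 2) := by positivity
      constructor
      · rw [le_div_iff₀ hpz]
        have hsq2 : (l * Real.sqrt (l ^ 2 - z ^ 2)) ^ 2 = l ^ 2 * (l ^ 2 - z ^ 2) := by
          rw [mul_pow, Real.sq_sqrt (le_of_lt hLz)]
        have hkey : (2 - l ^ 2) ^ 2 ≤ l ^ 2 * (l ^ 2 - z ^ 2) := by
          nlinarith [hLD, hzu, hD1, sq_nonneg (D - 2)]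
        have h2L : (0:ℝ) ≤ 2 - l ^ 2 := by linarith
        have hle : 2 - l ^ 2 ≤ l * Real.sqrt (l ^ 2 - z ^ 2) := by
          have h := Real.sqrt_le_sqrt hkey
          rwa [Real.sqrt_sq h2L, ← hsq2, Real.sqrt_sq (le_of_lt hpz)] at h
        linarith
      · have h := div_nonpos_of_nonpos_of_nonneg (show l ^ 2 - 2 ≤ 0 by linarith)
          (le_of_lt hpz)
        linarith [h]
    exact Real.strictAntiOn_arccos (hbound y hyu hLy) (hbound x hxu hLx) harg
  exact add_lt_add_of_le_of_lt hrho htau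

/-- For an integer `d ≥ 4` and `l = √(2d/(d+1))`, the function `x ↦ ρ(x) + τ(x)` is
strictly increasing on the interval `[√(2(d-3)/(d-2)), √(2(d-2)/(d-1))]`. -/
theorem rho_add_tau_strictMonoOn (d : ℕ) (hd : 4 ≤ d) :
    StrictMonoOn
      (fun x : ℝ => rhoAngle (Real.sqrt (2 * d / (d + 1))) x +
        tauAngle (Real.sqrt (2 * d / (d + 1))) x)
      (Set.Icc (Real.sqrt (2 * ((d : ℝ) - 3) / ((d : ℝ) - 2)))
        (Real.sqrt (2 * ((d : ℝ) - 2) / ((d : ℝ) - 1)))) := by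
  have hD : (4:ℝ) ≤ (d:ℝ) := by exact_mod_cast hd
  have hD1 : (0:ℝ) < (d:ℝ) + 1 := by linarith
  have hL : (Real.sqrt (2 * (d:ℝ) / ((d:ℝ) + 1))) ^ 2 = 2 * (d:ℝ) / ((d:ℝ) + 1) :=
    Real.sq_sqrt (by positivity)
  have hLD : (Real.sqrt (2 * (d:ℝ) / ((d:ℝ) + 1))) ^ 2 * ((d:ℝ) + 1) = 2 * (d:ℝ) := by
    rw [hL]; field_simp
  have hlpos : 0 < Real.sqrt (2 * (d:ℝ) / ((d:ℝ) + 1)) :=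
    Real.sqrt_pos.mpr (by positivity)
  intro x hx y hy hxy
  obtain ⟨hx1, hxu, hxl⟩ := memFacts (d:ℝ) x hD hx.1 hx.2
  obtain ⟨hy1, hyu, hyl⟩ := memFacts (d:ℝ) y hD hy.1 hy.2
  exact mainAux (d:ℝ) _ x y hD hLD hlpos hxy hx1 hxu hxl hy1 hyu hyl
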